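/- arXiv:2303.01400 — 6 statements merged into one kernel-verified Lean document; each statement's English description precedes it below -/
import Mathlib

section
/- For every real ε > 0, every real z ≥ 1, and all nonnegative reals x and y, it holds that (x + y)^z ≤ (1 + ε)^(z−1) · x^z + ((1 + ε)/ε)^(z−1) · y^z. -/
/-- Triangle Inequality for Powers, part 1 (Lemma 3.2): for every `ε > 0`, `z ≥ 1`,
and nonnegative reals `x, y`, `(x + y)^z ≤ (1+ε)^(z-1) * x^z + ((1+ε)/ε)^(z-1) * y^z`. -/
theorem triangle_inequality_for_powers (ε z x y : ℝ) (hε : 0 < ε) (hz : 1 ≤ z)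
    (hx : 0 ≤ x) (hy : 0 ≤ y) :
    (x + y) ^ z ≤ (1 + ε) ^ (z - 1) * x ^ z + ((1 + ε) / ε) ^ (z - 1) * y ^ z := by
  have h1 : (0:ℝ) < 1 + ε := by linarith
  set a : ℝ := (1 + ε)⁻¹ with ha
  set b : ℝ := ε / (1 + ε) with hb
  have hab : a + b = 1 := by rw [ha, hb]; field_simp
  have hkey := (convexOn_rpow hz).2
    (Set.mem_Ici.mpr (by positivity : (0:ℝ) ≤ (1+ε)*x))
    (Set.mem_Ici.mpr (by positivity : (0:ℝ) ≤ ((1+ε)/ε)*y))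
    (by positivity : (0:ℝ) ≤ a) (by positivity : (0:ℝ) ≤ b) hab
  simp only [smul_eq_mul] at hkey
  have e1 : a * ((1+ε)*x) + b * (((1+ε)/ε)*y) = x + y := by
    rw [ha, hb]; field_simp
  rw [e1] at hkey
  refine hkey.trans_eq ?_
  have e2 : a * ((1+ε)*x) ^ z = (1 + ε) ^ (z - 1) * x ^ z := by
    rw [Real.mul_rpow h1.le hx, Real.rpow_sub h1, Real.rpow_one, ha]
    ring
  have e3 : b * (((1+ε)/ε)*y) ^ z = ((1 + ε) / ε) ^ (z - 1) * y ^ z := by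
    have h2 : (0:ℝ) < (1+ε)/ε := by positivity
    rw [Real.mul_rpow h2.le hy, Real.rpow_sub h2, Real.rpow_one, hb]
    field_simp
  rw [e2, e3]
end

section
/- Let (Ω, d) be a metric space, let ε > 0 and z ≥ 1 be reals, and let u, v, w ∈ Ω. Then d(u, w)^z ≤ (1 + ε)^(z−1) · d(u, v)^z + ((1 + ε)/ε)^(z−1) · d(v, w)^z. -/
open Real

private lemma key_pow_ineq (ε z : ℝ) (hε : 0 < ε) (hz : 1 ≤ z)
    (a b : ℝ) (ha : 0 ≤ a) (hb : 0 ≤ b) :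
    (a + b) ^ z ≤ (1 + ε) ^ (z - 1) * a ^ z + ((1 + ε) / ε) ^ (z - 1) * b ^ z := by
  have h1ε : (0:ℝ) < 1 + ε := by linarith
  have hcx := convexOn_rpow hz
  have hx : ((1 + ε) * a) ∈ Set.Ici (0:ℝ) := Set.mem_Ici.mpr (by positivity)
  have hy : (((1 + ε) / ε) * b) ∈ Set.Ici (0:ℝ) := Set.mem_Ici.mpr (by positivity)
  have hl : (0:ℝ) ≤ 1 / (1 + ε) := by positivity
  have hm : (0:ℝ) ≤ ε / (1 + ε) := by positivity
  have hsum : 1 / (1 + ε) + ε / (1 + ε) = 1 := by field_simp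
  have h := hcx.2 hx hy hl hm hsum
  simp only [smul_eq_mul] at h
  have hcomb : 1 / (1 + ε) * ((1 + ε) * a) + ε / (1 + ε) * (((1 + ε) / ε) * b) = a + b := by
    field_simp
  rw [hcomb] at h
  calc (a + b) ^ z ≤ 1 / (1 + ε) * ((1 + ε) * a) ^ z + ε / (1 + ε) * (((1 + ε) / ε) * b) ^ z := h
    _ = (1 + ε) ^ (z - 1) * a ^ z + ((1 + ε) / ε) ^ (z - 1) * b ^ z := by
        rw [Real.mul_rpow (le_of_lt h1ε) ha, Real.mul_rpow (by positivity) hb,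
          Real.rpow_sub h1ε, Real.rpow_sub (by positivity), Real.rpow_one, Real.rpow_one]
        field_simp

/-- Triangle Inequality for Powers, part 2 (Lemma 3.2): in a metric space,
`d(u,w)^z ≤ (1+ε)^(z-1) * d(u,v)^z + ((1+ε)/ε)^(z-1) * d(v,w)^z`. -/
theorem triangle_inequality_for_powers_dist {Ω : Type*} [MetricSpace Ω]
    (ε z : ℝ) (hε : 0 < ε) (hz : 1 ≤ z) (u v w : Ω) :
    dist u w ^ z ≤ (1 + ε) ^ (z - 1) * dist u v ^ z
      + ((1 + ε) / ε) ^ (z - 1) * dist v w ^ z := by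
  calc dist u w ^ z ≤ (dist u v + dist v w) ^ z :=
        Real.rpow_le_rpow dist_nonneg (dist_triangle u v w) (le_trans zero_le_one hz)
    _ ≤ _ := key_pow_ineq ε z hε hz _ _ dist_nonneg dist_nonneg
end

section
/- Let τ ≥ 2 be a natural number, let c > 0 be a real number, and let x₀, x₁, …, x_τ be points in the Euclidean plane ℝ² such that ‖x_i − x_{i+2}‖ > c for every 0 ≤ i ≤ τ − 2, where ‖·‖ is the Euclidean norm. Then ∑_{i=0}^{τ−1} ‖x_i − x_{i+1}‖ ≥ c · ⌊τ/2⌋. -/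
lemma path_length_aux (c : ℝ) (hc : 0 < c) :
    ∀ τ (x : ℕ → EuclideanSpace ℝ (Fin 2)),
      (∀ i, i + 2 ≤ τ → c < ‖x i - x (i + 2)‖) →
      c * ((τ / 2 : ℕ) : ℝ) ≤ ∑ i ∈ Finset.range τ, ‖x i - x (i + 1)‖ := by
  intro τ
  induction τ using Nat.strong_induction_on with
  | _ τ ih =>
    match τ with
    | 0 => intro x _; simp
    | 1 => intro x _; simp [Finset.sum_range_one, norm_nonneg]
    | (n+2) =>
      intro x h
      have key := ih n (by omega) (fun i => x (i + 2))
        (fun i hi => h (i + 2) (by omega))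
      have hsplit : ∑ i ∈ Finset.range (n + 2), ‖x i - x (i + 1)‖
          = (∑ i ∈ Finset.range n, ‖x (i + 2) - x (i + 2 + 1)‖)
            + ‖x 1 - x 2‖ + ‖x 0 - x 1‖ := by
        rw [Finset.sum_range_succ' (fun i => ‖x i - x (i + 1)‖) (n + 1),
            Finset.sum_range_succ' (fun i => ‖x (i + 1) - x (i + 1 + 1)‖) n]
      have htri : c < ‖x 0 - x 1‖ + ‖x 1 - x 2‖ := by
        have h02 := h 0 (by omega)
        calc c < ‖x 0 - x 2‖ := h02
          _ ≤ ‖x 0 - x 1‖ + ‖x 1 - x 2‖ := norm_sub_le_norm_sub_add_norm_sub _ _ _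
      have hdiv : (((n + 2) / 2 : ℕ) : ℝ) = ((n / 2 : ℕ) : ℝ) + 1 := by
        have : (n + 2) / 2 = n / 2 + 1 := by omega
        rw [this]; push_cast; ring
      rw [hsplit, hdiv]
      nlinarith [key]

/-- Bounded Distance (core of Proposition 2.2): if `τ ≥ 2`, `c > 0`, and points
`x₀, …, x_τ` in ℝ² satisfy `‖x_i − x_{i+2}‖ > c` for every `0 ≤ i ≤ τ − 2`, then
`∑_{i=0}^{τ−1} ‖x_i − x_{i+1}‖ ≥ c · ⌊τ/2⌋`. -/
theorem path_length_lower_bound (τ : ℕ) (hτ : 2 ≤ τ) (c : ℝ) (hc : 0 < c)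
    (x : ℕ → EuclideanSpace ℝ (Fin 2))
    (h : ∀ i, i + 2 ≤ τ → c < ‖x i - x (i + 2)‖) :
    c * ((τ / 2 : ℕ) : ℝ) ≤ ∑ i ∈ Finset.range τ, ‖x i - x (i + 1)‖ := by
  exact path_length_aux c hc τ x h
end

section
/- There do not exist points c, p₁, p₂, p₃, p₄, p₅ ∈ ℝ² such that max(|c₁ − (pᵢ)₁|, |c₂ − (pᵢ)₂|) ≤ 2 for every i ∈ {1,…,5} and max(|(pᵢ)₁ − (pⱼ)₁|, |(pᵢ)₂ − (pⱼ)₂|) > 2 for all i ≠ j. -/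
/-- The star `K_{1,5}` cannot be realized as a unit square graph: there are no points
`c, p₁, …, p₅ ∈ ℝ²` with each `pᵢ` at ℓ∞ distance at most 2 from `c` while the `pᵢ`
are pairwise at ℓ∞ distance more than 2. -/
theorem no_K15_unit_square :
    ¬ ∃ (c : ℝ × ℝ) (p : Fin 5 → ℝ × ℝ),
      (∀ i, max |c.1 - (p i).1| |c.2 - (p i).2| ≤ 2) ∧
      (∀ i j, i ≠ j → 2 < max |(p i).1 - (p j).1| |(p i).2 - (p j).2|) := by
  rintro ⟨c, p, hc, hp⟩
  have key1 : ∀ i, -2 ≤ c.1 - (p i).1 ∧ c.1 - (p i).1 ≤ 2 := fun i =>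
    abs_le.mp (le_trans (le_max_left _ _) (hc i))
  have key2 : ∀ i, -2 ≤ c.2 - (p i).2 ∧ c.2 - (p i).2 ≤ 2 := fun i =>
    abs_le.mp (le_trans (le_max_right _ _) (hc i))
  have hninj : ¬ Function.Injective
      (fun i : Fin 5 => ((decide ((p i).1 ≤ c.1), decide ((p i).2 ≤ c.2)) : Bool × Bool)) := by
    intro h
    have := Fintype.card_le_of_injective _ h
    simp at this
  obtain ⟨i, j, hfij, hne⟩ := Function.not_injective_iff.mp hninj
  have h1 : ((p i).1 ≤ c.1) ↔ ((p j).1 ≤ c.1) := by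
    have := congrArg Prod.fst hfij
    simpa using this
  have h2 : ((p i).2 ≤ c.2) ↔ ((p j).2 ≤ c.2) := by
    have := congrArg Prod.snd hfij
    simpa using this
  have hd1 : |(p i).1 - (p j).1| ≤ 2 := by
    rw [abs_le]
    rcases le_or_gt (p i).1 c.1 with h | h
    · have hj := h1.mp h
      exact ⟨by linarith [(key1 i).2], by linarith [(key1 j).2]⟩
    · have hj := lt_of_not_ge (fun hh => h.not_ge (h1.mpr hh))
      exact ⟨by linarith [(key1 i).1, (key1 j).1], by linarith [(key1 i).1, (key1 j).1]⟩
  have hd2 : |(p i).2 - (p j).2| ≤ 2 := by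
    rw [abs_le]
    rcases le_or_gt (p i).2 c.2 with h | h
    · have hj := h2.mp h
      exact ⟨by linarith [(key2 i).2], by linarith [(key2 j).2]⟩
    · have hj := lt_of_not_ge (fun hh => h.not_ge (h2.mpr hh))
      exact ⟨by linarith [(key2 i).1, (key2 j).1], by linarith [(key2 i).1, (key2 j).1]⟩
  exact (hp i j hne).not_ge (max_le hd1 hd2)
end

section
/- Let w, h, ℓ, x₀, y₀ be reals with 0 < w, 0 ≤ h ≤ w, and ℓ ≥ w, and let S = [x₀, x₀ + ℓ] × [y₀, y₀ + ℓ] be an axis-parallel square of side length ℓ. Suppose there exist a point p = (p₁, p₂) ∈ S with 0 ≤ p₁ ≤ w and p₂ > h, and a point q = (q₁, q₂) ∈ S with 0 ≤ q₁ ≤ w and q₂ < 0. Then S contains the point (0, 0) or the point (w, h). -/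
/-- Geometric core of Claim 5.6: an axis-parallel square of side length `ℓ ≥ w`
containing a high point and a low point (w.r.t. the rectangle with corners `(0,0)` and
`(w,h)`, `0 ≤ h ≤ w`, `0 < w`) must contain `(0,0)` or `(w,h)`. -/
theorem square_contains_corner (w h ℓ x₀ y₀ : ℝ)
    (hw : 0 < w) (hh0 : 0 ≤ h) (hhw : h ≤ w) (hℓ : w ≤ ℓ)
    (p q : ℝ × ℝ)
    (hpS : p ∈ Set.Icc x₀ (x₀ + ℓ) ×ˢ Set.Icc y₀ (y₀ + ℓ))
    (hp1 : 0 ≤ p.1) (hp1' : p.1 ≤ w) (hp2 : h < p.2)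
    (hqS : q ∈ Set.Icc x₀ (x₀ + ℓ) ×ˢ Set.Icc y₀ (y₀ + ℓ))
    (hq1 : 0 ≤ q.1) (hq1' : q.1 ≤ w) (hq2 : q.2 < 0) :
    ((0 : ℝ), (0 : ℝ)) ∈ Set.Icc x₀ (x₀ + ℓ) ×ˢ Set.Icc y₀ (y₀ + ℓ) ∨
    (w, h) ∈ Set.Icc x₀ (x₀ + ℓ) ×ˢ Set.Icc y₀ (y₀ + ℓ) := by
  obtain ⟨⟨hpx1, hpx2⟩, hpy1, hpy2⟩ := hpS
  obtain ⟨⟨hqx1, hqx2⟩, hqy1, hqy2⟩ := hqS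
  have hy0 : y₀ ≤ 0 := le_of_lt (lt_of_le_of_lt hqy1 hq2)
  have hyh : h ≤ y₀ + ℓ := le_of_lt (lt_of_lt_of_le hp2 hpy2)
  rcases le_or_gt x₀ 0 with hx | hx
  · exact Or.inl ⟨⟨hx, le_trans hp1 hpx2⟩, hy0, le_trans hh0 hyh⟩
  · exact Or.inr ⟨⟨le_trans hpx1 hp1', by linarith⟩, le_trans hy0 hh0, hyh⟩
end

section
/- Let z ≥ 1 and 0 < ε ≤ 1 be reals, and let d, a be nonnegative reals. Then ((1 + ε/z)·d + (ε/z)·a)^z ≤ (1 + 7ε)·d^z + 3ε·a^z. -/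
open Real

private lemma two_pt_convex (p w₁ w₂ x y : ℝ) (hp : 1 ≤ p) (hw₁ : 0 ≤ w₁) (hw₂ : 0 ≤ w₂)
    (hw : w₁ + w₂ = 1) (hx : 0 ≤ x) (hy : 0 ≤ y) :
    (w₁ * x + w₂ * y) ^ p ≤ w₁ * x ^ p + w₂ * y ^ p := by
  have h := (convexOn_rpow hp).2 (Set.mem_Ici.2 hx) (Set.mem_Ici.2 hy) hw₁ hw₂ hw
  simpa using h

private lemma one_add_le_exp_rpow (x p : ℝ) (hx : 0 ≤ x) (hp : 0 ≤ p) :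
    (1 + x) ^ p ≤ Real.exp (x * p) := by
  rw [Real.exp_mul]
  exact Real.rpow_le_rpow (by linarith) (by linarith [Real.add_one_le_exp x]) hp

private lemma exp_two_mul_le (ε : ℝ) (hε0 : 0 < ε) (hε1 : ε ≤ 1) :
    Real.exp (2 * ε) ≤ 1 + 7 * ε := by
  have h := convexOn_exp.2 (Set.mem_univ (0 : ℝ)) (Set.mem_univ (2 : ℝ))
    (by linarith : (0:ℝ) ≤ 1 - ε) hε0.le (by ring)
  simp only [smul_eq_mul, mul_zero, zero_add, Real.exp_zero, mul_one] at h
  have h2 : Real.exp 2 < 8 := by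
    have h1 : Real.exp 1 < 2.7182818286 := Real.exp_one_lt_d9
    have : Real.exp 2 = Real.exp 1 * Real.exp 1 := by rw [← Real.exp_add]; norm_num
    nlinarith [Real.exp_pos 1]
  calc Real.exp (2 * ε) = Real.exp (ε * 2) := by ring_nf
    _ ≤ (1 - ε) * 1 + ε * Real.exp 2 := by simpa using h
    _ ≤ 1 + 7 * ε := by nlinarith

/-- Raising a `(1 + ε/z)`-approximate distance bound to the `z`-th power (Lemma 3.8):
for `z ≥ 1`, `0 < ε ≤ 1`, and nonnegative `d, a`,
`((1 + ε/z)·d + (ε/z)·a)^z ≤ (1 + 7ε)·d^z + 3ε·a^z`. -/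
theorem rpow_cost_bound (z ε d a : ℝ) (hz : 1 ≤ z) (hε0 : 0 < ε) (hε1 : ε ≤ 1)
    (hd : 0 ≤ d) (ha : 0 ≤ a) :
    ((1 + ε / z) * d + (ε / z) * a) ^ z ≤ (1 + 7 * ε) * d ^ z + 3 * ε * a ^ z := by
  have hz0 : 0 < z := lt_of_lt_of_le one_pos hz
  set u : ℝ := ε / z with hu_def
  have hu0 : 0 < u := div_pos hε0 hz0
  have huz : u * z = ε := div_mul_cancel₀ ε hz0.ne'
  have h1u : (0:ℝ) < 1 + u := by linarith
  -- convexity step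
  have key := two_pt_convex z (1/(1+u)) (u/(1+u)) ((1+u)^2 * d) ((1+u) * a) hz
    (by positivity) (by positivity) (by field_simp) (by positivity) (by positivity)
  have heq : (1/(1+u)) * ((1+u)^2 * d) + (u/(1+u)) * ((1+u) * a)
      = (1 + u) * d + u * a := by field_simp
  rw [heq] at key
  -- bound the first coefficient
  have hA : (1/(1+u)) * ((1+u)^2 * d) ^ z ≤ (1 + 7 * ε) * d ^ z := by
    rw [Real.mul_rpow (by positivity) hd]
    have h1 : ((1+u)^2 : ℝ) ^ z ≤ Real.exp (2 * ε) := by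
      have hsq : ((1+u)^2 : ℝ) ≤ Real.exp (2 * u) := by
        have h1e : 1 + u ≤ Real.exp u := by linarith [Real.add_one_le_exp u]
        have h2e : Real.exp (2 * u) = Real.exp u * Real.exp u := by
          rw [← Real.exp_add]; ring_nf
        nlinarith [Real.exp_pos u]
      calc ((1+u)^2 : ℝ) ^ z ≤ (Real.exp (2 * u)) ^ z :=
            Real.rpow_le_rpow (by positivity) hsq hz0.le
        _ = Real.exp (2 * u * z) := (Real.exp_mul _ _).symm
        _ = Real.exp (2 * ε) := by rw [mul_assoc, huz]
    have hdz : (0:ℝ) ≤ d ^ z := Real.rpow_nonneg hd z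
    have hc : (1/(1+u)) * ((1+u)^2 : ℝ) ^ z ≤ 1 + 7 * ε := by
      calc (1/(1+u)) * ((1+u)^2 : ℝ) ^ z ≤ 1 * ((1+u)^2 : ℝ) ^ z := by
            apply mul_le_mul_of_nonneg_right _ (Real.rpow_nonneg (by positivity) z)
            rw [div_le_one h1u]; linarith
        _ = ((1+u)^2 : ℝ) ^ z := one_mul _
        _ ≤ Real.exp (2 * ε) := h1
        _ ≤ 1 + 7 * ε := exp_two_mul_le ε hε0 hε1
    calc (1/(1+u)) * (((1+u)^2 : ℝ) ^ z * d ^ z)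
        = ((1/(1+u)) * ((1+u)^2 : ℝ) ^ z) * d ^ z := by ring
      _ ≤ (1 + 7 * ε) * d ^ z := mul_le_mul_of_nonneg_right hc hdz
  -- bound the second coefficient
  have hB : (u/(1+u)) * ((1+u) * a) ^ z ≤ 3 * ε * a ^ z := by
    rw [Real.mul_rpow h1u.le ha]
    have haz : (0:ℝ) ≤ a ^ z := Real.rpow_nonneg ha z
    have hc : (u/(1+u)) * (1+u) ^ z ≤ 3 * ε := by
      have h1 : (1+u) ^ z ≤ Real.exp ε := by
        calc (1+u) ^ z ≤ Real.exp (u * z) := one_add_le_exp_rpow u z hu0.le hz0.le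
          _ = Real.exp ε := by rw [huz]
      have h2 : Real.exp ε ≤ 3 := by
        have := Real.exp_one_lt_d9
        calc Real.exp ε ≤ Real.exp 1 := Real.exp_le_exp.2 hε1
          _ ≤ 3 := by linarith
      have hu' : u/(1+u) ≤ ε := by
        rw [div_le_iff₀ h1u]
        have : u ≤ ε := by
          rw [hu_def, div_le_iff₀ hz0]; nlinarith
        nlinarith
      calc (u/(1+u)) * (1+u) ^ z ≤ ε * 3 := by
            apply mul_le_mul hu' (h1.trans h2) (Real.rpow_nonneg h1u.le z) hε0.le
        _ = 3 * ε := by ring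
    calc (u/(1+u)) * ((1+u) ^ z * a ^ z) = ((u/(1+u)) * (1+u) ^ z) * a ^ z := by ring
      _ ≤ 3 * ε * a ^ z := mul_le_mul_of_nonneg_right hc haz
  calc ((1 + u) * d + u * a) ^ z
      ≤ (1/(1+u)) * ((1+u)^2 * d) ^ z + (u/(1+u)) * ((1+u) * a) ^ z := key
    _ ≤ (1 + 7 * ε) * d ^ z + 3 * ε * a ^ z := add_le_add hA hB
end
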